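/- arXiv:math/0512083 — 3 statements merged into one kernel-verified Lean document; each statement's English description precedes it below -/
import Mathlib

section
/- Let N ≥ 3 and let a_1 < a_2 < … < a_N be positive integers with GCD(a_1, …, a_N) = 1. Then μ₀(S_{N-1}) ≤ f_N(a_1, …, a_N) / (a_1 ⋯ a_N)^{1/(N-1)}, where S_{N-1} is the standard (N-1)-simplex, μ₀ is the absolute inhomogeneous minimum and f_N is the largest integer not representable as a positive integer combination of a_1, …, a_N. -/
open scoped Pointwise

/-- `L` is a covering lattice for `S`: the translates of `S` by elements of `L`
cover all of `ℝⁿ`. -/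
def IsCoveringLattice {n : ℕ} (L S : Set (Fin n → ℝ)) : Prop :=
  ∀ x : Fin n → ℝ, ∃ l ∈ L, ∃ s ∈ S, x = s + l

/-- The inhomogeneous minimum `μ(S, L)` of a set `S` with respect to a lattice `L`. -/
noncomputable def inhomMin {n : ℕ} (S L : Set (Fin n → ℝ)) : ℝ :=
  sInf {σ : ℝ | 0 < σ ∧ IsCoveringLattice L (σ • S)}

/-- The lattice generated by the columns of the matrix `B`. -/
def latticeOf {n : ℕ} (B : Matrix (Fin n) (Fin n) ℝ) : Set (Fin n → ℝ) :=
  {x | ∃ m : Fin n → ℤ, x = B.mulVec fun i => (m i : ℝ)}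

/-- The absolute inhomogeneous minimum `μ₀(S)`: the infimum of `μ(S, L)` over all
lattices `L` of determinant `1`. -/
noncomputable def absInhomMin {n : ℕ} (S : Set (Fin n → ℝ)) : ℝ :=
  sInf {μ : ℝ | ∃ B : Matrix (Fin n) (Fin n) ℝ, |B.det| = 1 ∧ μ = inhomMin S (latticeOf B)}

/-- The standard simplex `S_n = {x : xᵢ ≥ 0, ∑ xᵢ ≤ 1}`. -/
def cornerSimplex (n : ℕ) : Set (Fin n → ℝ) :=
  {x | (∀ i, 0 ≤ x i) ∧ ∑ i, x i ≤ 1}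

/-- `f` is the largest natural number which is not a positive integer
combination of `a_1, …, a_N`. -/
def IsFrobF (N : ℕ) (a : Fin N → ℕ) (f : ℕ) : Prop :=
  IsGreatest {n : ℕ | ¬ ∃ c : Fin N → ℕ, (∀ i, 0 < c i) ∧ ∑ i, c i * a i = n} f

lemma int_gcd_univ_succ (n : ℕ) (q : ℤ) (b : Fin (n+1) → ℤ) :
    Int.gcd q (Finset.univ.gcd b)
      = Int.gcd (b 0) ((Int.gcd q (Finset.univ.gcd fun i : Fin n => b i.succ) : ℤ)) := by
  apply Nat.dvd_antisymm
  · rw [← Int.natCast_dvd_natCast]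
    apply Int.dvd_coe_gcd
    · exact ((Int.gcd_dvd_right _ _)).trans (Finset.gcd_dvd (Finset.mem_univ 0))
    · apply Int.dvd_coe_gcd (Int.gcd_dvd_left _ _)
      apply dvd_trans (Int.gcd_dvd_right _ _)
      apply Finset.dvd_gcd
      intro i _
      exact Finset.gcd_dvd (Finset.mem_univ i.succ)
  · rw [← Int.natCast_dvd_natCast]
    apply Int.dvd_coe_gcd
    · exact dvd_trans (Int.gcd_dvd_right _ _) (Int.gcd_dvd_left _ _)
    · apply Finset.dvd_gcd
      intro i _
      induction i using Fin.cases with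
      | zero => exact (Int.gcd_dvd_left _ _)
      | succ i' =>
        exact dvd_trans (dvd_trans (Int.gcd_dvd_right _ _) (Int.gcd_dvd_right _ _))
          (Finset.gcd_dvd (Finset.mem_univ i'))

lemma latt_basis : ∀ (n : ℕ) (q : ℤ), q ≠ 0 → ∀ (b : Fin n → ℤ),
    ∃ (M : Matrix (Fin n) (Fin n) ℤ) (v : Fin n → ℤ),
      M.det.natAbs * Int.gcd q (Finset.univ.gcd b) = q.natAbs ∧
      q ∣ (∑ i, b i * v i) - (Int.gcd q (Finset.univ.gcd b) : ℤ) ∧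
      ∀ l : Fin n → ℤ, q ∣ (∑ i, b i * l i) → ∃ m : Fin n → ℤ, l = M.mulVec m := by
  intro n
  induction n with
  | zero =>
    intro q hq b
    refine ⟨1, 0, ?_, ?_, ?_⟩
    · simp [Int.gcd]
    · simp only [Finset.univ_eq_empty, Finset.gcd_empty, Int.gcd_zero_right,
        Finset.sum_empty, zero_sub, dvd_neg]
      exact Int.dvd_natAbs.mpr dvd_rfl
    · intro l _
      exact ⟨l, funext fun i => i.elim0⟩
  | succ n IH =>
    intro q hq b
    set b' : Fin n → ℤ := fun i => b i.succ with hb'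
    obtain ⟨M', v', hdet', hv', hsurj'⟩ := IH q hq b'
    set g' : ℤ := (Int.gcd q (Finset.univ.gcd b') : ℤ) with hg'
    have hg'0 : g' ≠ 0 := by
      simp only [hg', ne_eq, Int.natCast_eq_zero, Int.gcd_eq_zero_iff]
      tauto
    have hg'nn : 0 ≤ g' := Int.natCast_nonneg _
    set G : ℤ := (Int.gcd (b 0) g' : ℤ) with hG
    have hG0 : G ≠ 0 := by
      simp only [hG, ne_eq, Int.natCast_eq_zero, Int.gcd_eq_zero_iff]
      tauto
    have hGnn : 0 ≤ G := Int.natCast_nonneg _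
    have hGb0 : G ∣ b 0 := (Int.gcd_dvd_left _ _)
    have hGg' : G ∣ g' := (Int.gcd_dvd_right _ _)
    set d : ℤ := g' / G with hd
    have hdG : d * G = g' := Int.ediv_mul_cancel hGg'
    have hd0 : d ≠ 0 := fun h => hg'0 (by rw [← hdG, h, zero_mul])
    have hge : g' ∣ b 0 * d := by
      refine ⟨b 0 / G, ?_⟩
      rw [← hdG, mul_assoc, Int.mul_ediv_cancel' hGb0, mul_comm]
    set e : ℤ := b 0 * d / g' with he'
    have he : e * g' = b 0 * d := Int.ediv_mul_cancel hge
    obtain ⟨k, hk⟩ : ∃ k, (∑ i, b' i * v' i) = g' + q * k := by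
      obtain ⟨k, hk⟩ := hv'
      exact ⟨k, by linarith⟩
    set col0 : Fin (n+1) → ℤ := Fin.cons d (fun i => -e * v' i) with hcol0def
    have hcol0 : q ∣ ∑ i, b i * col0 i := by
      have hsum : ∑ i, b i * col0 i = b 0 * d + -e * (∑ i, b' i * v' i) := by
        rw [Fin.sum_univ_succ, Finset.mul_sum]
        simp only [hcol0def, Fin.cons_zero, Fin.cons_succ]
        congr 1
        apply Finset.sum_congr rfl
        intro x _
        show b x.succ * (-e * v' x) = -e * (b' x * v' x)
        simp only [hb']
        ring
      refine ⟨-e * k, ?_⟩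
      rw [hsum, hk]
      have h := he
      ring_nf
      linarith [he]
    set M : Matrix (Fin (n+1)) (Fin (n+1)) ℤ := Matrix.of fun i j =>
      Fin.cases (col0 i) (fun j' => Fin.cases 0 (fun i' => M' i' j') i) j with hMdef
    have hM00 : M 0 0 = d := by simp [hMdef, hcol0def]
    have hM0s : ∀ j' : Fin n, M 0 j'.succ = 0 := by intro j'; simp [hMdef]
    have hMs0 : ∀ i' : Fin n, M i'.succ 0 = -e * v' i' := by
      intro i'; simp [hMdef, hcol0def]
    have hMss : ∀ i' j' : Fin n, M i'.succ j'.succ = M' i' j' := by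
      intro i' j'; simp [hMdef]
    have hsub : M.submatrix Fin.succ Fin.succ = M' := by
      ext i j; simp [Matrix.submatrix_apply, hMss]
    have hdet : M.det = d * M'.det := by
      rw [Matrix.det_succ_row_zero]
      rw [Finset.sum_eq_single 0]
      · rw [hM00]
        rw [show ((0:Fin (n+1)).succAbove) = Fin.succ from Fin.succAbove_zero]
        rw [hsub]
        simp
      · intro j _ hj
        obtain ⟨j', rfl⟩ := Fin.exists_succ_eq.mpr hj
        rw [hM0s]
        ring
      · intro h
        exact absurd (Finset.mem_univ 0) h
    refine ⟨M, Fin.cons (Int.gcdA (b 0) g') (fun i => Int.gcdB (b 0) g' * v' i), ?_, ?_, ?_⟩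
    · -- determinant
      rw [int_gcd_univ_succ n q b, hdet]
      have h1 : (d * M'.det).natAbs = d.natAbs * M'.det.natAbs := Int.natAbs_mul _ _
      rw [h1]
      have h2 : d.natAbs * G.natAbs = g'.natAbs := by
        rw [← Int.natAbs_mul, hdG]
      have hGnat : G.natAbs = Int.gcd (b 0) g' := by simp [hG]
      have hgnat : g'.natAbs = Int.gcd q (Finset.univ.gcd b') := by simp [hg']
      calc d.natAbs * M'.det.natAbs * Int.gcd (b 0) g'
          = M'.det.natAbs * (d.natAbs * G.natAbs) := by rw [hGnat]; ring
        _ = M'.det.natAbs * g'.natAbs := by rw [h2]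
        _ = q.natAbs := by rw [hgnat]; exact hdet'
    · -- v property
      have hbez : G = b 0 * Int.gcdA (b 0) g' + g' * Int.gcdB (b 0) g' := by
        rw [hG]; exact_mod_cast Int.gcd_eq_gcd_ab (b 0) g'
      have hsum : (∑ i, b i * (Fin.cons (Int.gcdA (b 0) g')
          (fun i => Int.gcdB (b 0) g' * v' i) : Fin (n+1) → ℤ) i)
          = b 0 * Int.gcdA (b 0) g' + Int.gcdB (b 0) g' * (∑ i, b' i * v' i) := by
        rw [Fin.sum_univ_succ, Finset.mul_sum]
        simp only [Fin.cons_zero, Fin.cons_succ]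
        congr 1
        apply Finset.sum_congr rfl
        intro x _
        show b x.succ * (Int.gcdB (b 0) g' * v' x) = Int.gcdB (b 0) g' * (b' x * v' x)
        simp only [hb']
        ring
      rw [int_gcd_univ_succ n q b]
      refine ⟨Int.gcdB (b 0) g' * k, ?_⟩
      rw [hsum, hk, ← hG, hbez]
      ring
    · -- surjectivity
      intro l hl
      have hsplit : (∑ i, b i * l i) = b 0 * l 0 + ∑ i, b' i * l i.succ := by
        rw [Fin.sum_univ_succ]
      have hg'q : g' ∣ q := (Int.gcd_dvd_left _ _)
      have hg'b' : ∀ i, g' ∣ b' i :=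
        fun i => dvd_trans (Int.gcd_dvd_right _ _) (Finset.gcd_dvd (Finset.mem_univ i))
      have h1 : g' ∣ b 0 * l 0 := by
        have h2 : g' ∣ ∑ i, b' i * l i.succ :=
          Finset.dvd_sum fun i _ => Dvd.dvd.mul_right (hg'b' i) _
        have h3 : g' ∣ ∑ i, b i * l i := dvd_trans hg'q hl
        rw [hsplit] at h3
        exact (dvd_add_right h2).mp (by rwa [add_comm] at h3)
      have hcop : Int.gcd (b 0 / G) d = 1 := by
        have hpos : 0 < Int.gcd (b 0) g' :=
          Nat.pos_of_ne_zero (by simpa [hG, Int.natCast_eq_zero] using hG0)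
        have := Int.gcd_div_gcd_div_gcd hpos
        simpa [hd, hG] using this
      have hdl0 : d ∣ l 0 := by
        have hβ : (b 0 / G) * G = b 0 := Int.ediv_mul_cancel hGb0
        have h4 : d * G ∣ (b 0 / G) * l 0 * G := by
          rw [hdG, mul_comm ((b 0 / G)) (l 0), mul_assoc, hβ]
          exact h1.trans (dvd_of_eq (mul_comm _ _))
        have h5 : d ∣ (b 0 / G) * l 0 := (mul_dvd_mul_iff_right hG0).mp h4
        exact (Int.isCoprime_iff_gcd_eq_one.mpr
          (by rwa [Int.gcd_comm] at hcop)).dvd_of_dvd_mul_left h5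
      set m₀ : ℤ := l 0 / d with hm₀def
      have hm₀ : m₀ * d = l 0 := Int.ediv_mul_cancel hdl0
      set l'' : Fin n → ℤ := fun i => l i.succ + m₀ * e * v' i with hl''def
      have hql'' : q ∣ ∑ i, b' i * l'' i := by
        obtain ⟨K, hK⟩ := hl
        refine ⟨K + m₀ * e * k, ?_⟩
        have hexp : ∑ i, b' i * l'' i
            = (∑ i, b' i * l i.succ) + m₀ * e * (∑ i, b' i * v' i) := by
          simp only [hl''def, mul_add, Finset.sum_add_distrib, Finset.mul_sum]
          congr 1
          apply Finset.sum_congr rfl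
          intro x _
          ring
        rw [hexp, hk]
        have hKK : b 0 * l 0 + ∑ i, b' i * l i.succ = q * K := by rw [← hsplit, hK]
        have he2 : m₀ * e * g' = b 0 * l 0 := by
          rw [mul_assoc, he, ← hm₀]; ring
        linarith [hKK, he2]
      obtain ⟨m', hm'⟩ := hsurj' l'' hql''
      refine ⟨Fin.cons m₀ m', ?_⟩
      funext i
      have hmv : M.mulVec (Fin.cons m₀ m') i
          = M i 0 * m₀ + ∑ j', M i j'.succ * m' j' := by
        simp [Matrix.mulVec, dotProduct, Fin.sum_univ_succ]
      induction i using Fin.cases with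
      | zero =>
        rw [hmv, hM00]
        simp only [hM0s]
        simp
        linarith [hm₀]
      | succ i' =>
        rw [hmv, hMs0]
        have hrow : ∑ j', M i'.succ j'.succ * m' j' = (M'.mulVec m') i' := by
          rw [Matrix.mulVec, dotProduct]
          exact Finset.sum_congr rfl fun j' _ => by rw [hMss]
        rw [hrow, ← hm']
        simp only [hl''def]
        ring

lemma cover_core (n : ℕ) (hn : 1 ≤ n) (a : Fin (n+1) → ℕ) (hpos : ∀ i, 0 < a i) (f : ℕ)
    (hrep : ∀ m : ℕ, f < m → ∃ c : Fin (n+1) → ℕ, (∀ i, 0 < c i) ∧ ∑ i, c i * a i = m)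
    (hfS : ∑ i, a i ≤ f + 1) (u : Fin n → ℝ) :
    ∃ l : Fin n → ℤ,
      ((a (Fin.last n) : ℤ) ∣ ∑ i, (a i.castSucc : ℤ) * l i) ∧
      (∀ i, (l i : ℝ) ≤ u i) ∧
      (∑ i, (a i.castSucc : ℝ) * (u i - (l i : ℝ))) ≤ f := by
  set q : ℤ := (a (Fin.last n) : ℤ) with hqdef
  have hq0 : 0 < q := by rw [hqdef]; exact Int.natCast_pos.mpr (hpos _)
  set bZ : Fin n → ℤ := fun i => (a i.castSucc : ℤ) with hbZ
  have hbZ0 : ∀ i, 0 < bZ i := fun i => Int.natCast_pos.mpr (hpos _)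
  set k : Fin n → ℤ := fun i => ⌊u i⌋ with hk
  set r : ℤ := ∑ i, bZ i * k i with hr
  set S' : ℤ := ∑ i, bZ i with hS'
  have hsplitS : (∑ i : Fin (n+1), (a i : ℤ)) = S' + q := by
    rw [Fin.sum_univ_castSucc]
  have hfS' : S' + q ≤ (f : ℤ) + 1 := by
    rw [← hsplitS]
    exact_mod_cast hfS
  set x : ℤ := (f : ℤ) - S' - r with hx
  set m₀ : ℤ := (f : ℤ) - S' - x % q with hm₀
  have hmod0 : 0 ≤ x % q := Int.emod_nonneg x (ne_of_gt hq0)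
  have hmodq : x % q < q := Int.emod_lt_of_pos x hq0
  have hdvd_m₀r : q ∣ m₀ - r := by
    have h1 : m₀ - r = x - x % q := by rw [hm₀, hx]; ring
    rw [h1, Int.emod_def]
    exact ⟨x / q, by ring⟩
  have hm₀nn : 0 ≤ m₀ := by omega
  set Mb : ℤ := m₀ + S' + q with hMb
  have hfMb : (f : ℤ) < Mb := by omega
  have hMbnn : 0 ≤ Mb := by positivity
  obtain ⟨c, hcpos, hcsum⟩ := hrep Mb.toNat (by omega)
  have hcsumZ : (∑ i : Fin (n+1), (c i : ℤ) * (a i : ℤ)) = Mb := by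
    rw [show Mb = ((Mb.toNat : ℤ)) from (Int.toNat_of_nonneg hMbnn).symm]
    exact_mod_cast congrArg (Nat.cast : ℕ → ℤ) hcsum
  have hcsplit : (∑ i : Fin n, (c i.castSucc : ℤ) * bZ i) + (c (Fin.last n) : ℤ) * q = Mb := by
    rw [← hcsumZ, Fin.sum_univ_castSucc]
  set E : ℤ := ∑ i, bZ i * ((c i.castSucc : ℤ) - 1) with hE
  have h1 : E = (∑ i : Fin n, (c i.castSucc : ℤ) * bZ i) - ∑ i : Fin n, bZ i := by
    rw [hE, ← Finset.sum_sub_distrib]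
    exact Finset.sum_congr rfl fun i _ => by ring
  have hEeq : E = Mb - S' - (c (Fin.last n) : ℤ) * q := by
    rw [h1, ← hcsplit, hS']
    ring
  have hclast1 : 1 ≤ (c (Fin.last n) : ℤ) := by exact_mod_cast hcpos _
  have hEle : E ≤ (f : ℤ) - S' := by
    have h2 : E = m₀ + q * (1 - (c (Fin.last n) : ℤ)) := by rw [hEeq, hMb]; ring
    nlinarith
  refine ⟨fun i => k i - ((c i.castSucc : ℤ) - 1), ?_, ?_, ?_⟩
  · have hsum : ∑ i, bZ i * (k i - ((c i.castSucc : ℤ) - 1)) = r - E := by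
      rw [hr, hE, ← Finset.sum_sub_distrib]
      exact Finset.sum_congr rfl fun i _ => by ring
    rw [hsum]
    have h2 : r - E = -(m₀ - r) - q * (1 - (c (Fin.last n) : ℤ)) := by
      rw [hEeq, hMb]; ring
    rw [h2]
    exact dvd_sub (dvd_neg.mpr hdvd_m₀r) ⟨_, rfl⟩
  · intro i
    have h1 : 1 ≤ (c i.castSucc : ℤ) := by exact_mod_cast hcpos _
    have h2 : ((k i : ℝ)) ≤ u i := Int.floor_le (u i)
    push_cast
    push_cast at h2
    have h3 : (1 : ℝ) ≤ ((c i.castSucc : ℕ) : ℝ) := by exact_mod_cast h1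
    linarith
  · set A : ℝ := ∑ i, ((bZ i : ℤ) : ℝ) * (u i - ((k i : ℤ) : ℝ)) with hA
    have hstrict : A < ((S' : ℤ) : ℝ) := by
      rw [hA, hS']
      simp only [hbZ, hk]
      push_cast
      have : Nonempty (Fin n) := ⟨⟨0, hn⟩⟩
      apply Finset.sum_lt_sum_of_nonempty Finset.univ_nonempty
      intro i _
      have hb : (0 : ℝ) < ((a i.castSucc : ℕ) : ℝ) := by exact_mod_cast hpos _
      have hflt : u i - ((⌊u i⌋ : ℤ) : ℝ) < 1 := by
        have := Int.lt_floor_add_one (u i)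
        linarith
      nlinarith [hflt, hb]

    have hfin : (∑ i, (a i.castSucc : ℝ) * (u i - ((k i - ((c i.castSucc : ℤ) - 1) : ℤ) : ℝ)))
        = A + ((E : ℤ) : ℝ) := by
      rw [hA, hE]
      push_cast
      rw [← Finset.sum_add_distrib]
      exact Finset.sum_congr rfl fun i _ => by simp only [hbZ, hk]; push_cast; ring
    have hEleR : ((E : ℤ) : ℝ) ≤ (f : ℝ) - ((S' : ℤ) : ℝ) := by exact_mod_cast hEle
    calc (∑ i, (a i.castSucc : ℝ) * (u i - ((k i - ((c i.castSucc : ℤ) - 1) : ℤ) : ℝ)))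
        = A + ((E : ℤ) : ℝ) := hfin
      _ ≤ (f : ℝ) := by linarith

/-- **Aliev–Gruber, Theorem 1 (i)**: for `N ≥ 3` and positive integers
`a_1 < … < a_N` with `gcd = 1`,
`μ₀(S_{N-1}) ≤ f_N(a_1, …, a_N) / (a_1 ⋯ a_N)^{1/(N-1)}`. -/
theorem frobenius_lower_bound (N : ℕ) (hN : 3 ≤ N) (a : Fin N → ℕ)
    (hpos : ∀ i, 0 < a i) (hmono : StrictMono a)
    (hgcd : Finset.univ.gcd a = 1) (f : ℕ) (hf : IsFrobF N a f) :
    absInhomMin (cornerSimplex (N - 1)) ≤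
      (f : ℝ) / (∏ i, (a i : ℝ)) ^ ((1 : ℝ) / ((N : ℝ) - 1)) := by
  obtain ⟨n, rfl⟩ : ∃ n, N = n + 1 := ⟨N - 1, by omega⟩
  have hn2 : 2 ≤ n := by omega
  -- basic consequences of the Frobenius property
  have hrep : ∀ m : ℕ, f < m →
      ∃ c : Fin (n+1) → ℕ, (∀ i, 0 < c i) ∧ ∑ i, c i * a i = m := by
    intro m hm
    by_contra h
    exact absurd (hf.2 h) (by omega)
  have hSone : 1 ≤ ∑ i, a i :=
    le_trans (hpos 0) (Finset.single_le_sum (fun i _ => Nat.zero_le _) (Finset.mem_univ 0))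
  have hfS : ∑ i, a i ≤ f + 1 := by
    have hmem : ((∑ i, a i) - 1) ∈
        {m : ℕ | ¬ ∃ c : Fin (n+1) → ℕ, (∀ i, 0 < c i) ∧ ∑ i, c i * a i = m} := by
      rintro ⟨c, hcpos, hcsum⟩
      have hle : ∑ i, a i ≤ ∑ i, c i * a i :=
        Finset.sum_le_sum fun i _ => Nat.le_mul_of_pos_left (a i) (hcpos i)
      omega
    have := hf.2 hmem
    omega
  have hSN : n + 1 ≤ ∑ i, a i := by
    calc n + 1 = ∑ _i : Fin (n+1), 1 := by simp
      _ ≤ ∑ i, a i := Finset.sum_le_sum fun i _ => hpos i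
  have hf1 : 1 ≤ f := by omega
  -- the lattice basis
  set q : ℤ := (a (Fin.last n) : ℤ) with hqdef
  have hq0 : q ≠ 0 := by
    rw [hqdef]
    exact_mod_cast (hpos _).ne'
  set bZ : Fin n → ℤ := fun i => (a i.castSucc : ℤ) with hbZ
  obtain ⟨M, v, hdet, -, hsurj⟩ := latt_basis n q hq0 bZ
  have hgcd1 : Int.gcd q (Finset.univ.gcd bZ) = 1 := by
    have hdvd : ∀ i : Fin (n+1),
        ((Int.gcd q (Finset.univ.gcd bZ) : ℤ)) ∣ (a i : ℤ) := by
      intro i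
      induction i using Fin.lastCases with
      | last => exact (Int.gcd_dvd_left _ _)
      | cast j => exact dvd_trans (Int.gcd_dvd_right _ _) (Finset.gcd_dvd (Finset.mem_univ j))
    have h2 : Int.gcd q (Finset.univ.gcd bZ) ∣ Finset.univ.gcd a :=
      Finset.dvd_gcd fun i _ => Int.natCast_dvd_natCast.mp (hdvd i)
    rw [hgcd] at h2
    exact Nat.dvd_one.mp h2
  have hdetM : (M.det.natAbs : ℝ) = (a (Fin.last n) : ℝ) := by
    rw [hgcd1, mul_one] at hdet
    rw [hdet, hqdef]
    simp
  -- real constants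
  set P : ℝ := ∏ i, (a i : ℝ) with hP
  have hP0 : 0 < P := Finset.prod_pos fun i _ => by exact_mod_cast hpos i
  set cc : ℝ := P ^ (-((1:ℝ)/(n:ℝ))) with hcc
  have hc0 : 0 < cc := Real.rpow_pos_of_pos hP0 _
  have hnne : ((n:ℝ)) ≠ 0 := by positivity
  have hcn : cc ^ n * P = 1 := by
    rw [hcc, ← Real.rpow_natCast (P ^ (-((1:ℝ)/(n:ℝ)))) n, ← Real.rpow_mul hP0.le]
    rw [show (-((1:ℝ)/(n:ℝ))) * (n:ℝ) = -1 by field_simp]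
    rw [Real.rpow_neg_one]
    exact inv_mul_cancel₀ hP0.ne'
  have hRHS : (f : ℝ) / P ^ ((1:ℝ)/(((n:ℕ):ℝ) + 1 - 1)) = (f : ℝ) * cc := by
    rw [show (((n:ℕ):ℝ) + 1 - 1) = (n:ℝ) by ring]
    rw [hcc, Real.rpow_neg hP0.le, div_eq_mul_inv]
  -- the matrix B
  set B : Matrix (Fin n) (Fin n) ℝ :=
    Matrix.of (fun i j => cc * (a i.castSucc : ℝ) * (M i j : ℝ)) with hB
  have hBdet : |B.det| = 1 := by
    have hBfact : B = cc • (Matrix.diagonal (fun i => (a i.castSucc : ℝ))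
        * M.map (Int.cast : ℤ → ℝ)) := by
      ext i j
      simp [hB, Matrix.diagonal_mul, Matrix.map_apply]
      ring
    have hmapdet : (M.map (Int.cast : ℤ → ℝ)).det = ((M.det : ℤ) : ℝ) := by
      rw [show (Int.cast : ℤ → ℝ) = ⇑(Int.castRingHom ℝ) from rfl,
        ← RingHom.mapMatrix_apply, ← RingHom.map_det]
    have hprodsplit : (∏ i : Fin n, ((a i.castSucc : ℕ) : ℝ)) * (a (Fin.last n) : ℝ) = P := by
      rw [hP, Fin.prod_univ_castSucc]
    rw [hBfact, Matrix.det_smul, Matrix.det_mul, Matrix.det_diagonal, hmapdet]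
    rw [abs_mul, abs_mul]
    rw [abs_of_pos (pow_pos hc0 _)]
    rw [abs_of_nonneg (Finset.prod_nonneg fun i _ => by positivity)]
    rw [← Int.cast_abs, Int.abs_eq_natAbs, Int.cast_natCast, hdetM]
    rw [Fintype.card_fin, hprodsplit]
    exact hcn
  -- the covering property
  set σ : ℝ := (f : ℝ) * cc with hσ
  have hfR : (0:ℝ) < f := by exact_mod_cast hf1
  have hσ0 : 0 < σ := mul_pos hfR hc0
  have hca : ∀ i : Fin n, (0:ℝ) < cc * (a i.castSucc : ℝ) :=
    fun i => mul_pos hc0 (by exact_mod_cast hpos _)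
  have hcov : IsCoveringLattice (latticeOf B) (σ • cornerSimplex n) := by
    intro xv
    set u : Fin n → ℝ := fun i => xv i / (cc * (a i.castSucc : ℝ)) with hu
    obtain ⟨l, hdvd, hle, hsum⟩ := cover_core n (by omega) a hpos f hrep hfS u
    obtain ⟨m, hm⟩ := hsurj l hdvd
    have hxv : ∀ i, xv i = cc * (a i.castSucc : ℝ) * u i := by
      intro i
      rw [hu]
      rw [mul_div_assoc']
      rw [eq_div_iff (hca i).ne']
      ring
    have hlv : ∀ i, B.mulVec (fun j => ((m j : ℤ) : ℝ)) i
        = cc * (a i.castSucc : ℝ) * ((l i : ℤ) : ℝ) := by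
      intro i
      calc B.mulVec (fun j => ((m j : ℤ) : ℝ)) i
          = ∑ j, (cc * (a i.castSucc : ℝ) * ((M i j : ℤ) : ℝ)) * ((m j : ℤ) : ℝ) := by
            simp [Matrix.mulVec, dotProduct, hB]
        _ = cc * (a i.castSucc : ℝ) * ∑ j, ((M i j * m j : ℤ) : ℝ) := by
            rw [Finset.mul_sum]
            exact Finset.sum_congr rfl fun j _ => by push_cast; ring
        _ = cc * (a i.castSucc : ℝ) * (((∑ j, M i j * m j : ℤ)) : ℝ) := by
            rw [Int.cast_sum]
        _ = cc * (a i.castSucc : ℝ) * ((l i : ℤ) : ℝ) := by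
            congr 2
            rw [hm]
            rfl
    set sv : Fin n → ℝ := fun i => xv i - B.mulVec (fun j => ((m j : ℤ) : ℝ)) i with hsv
    have hsvi : ∀ i, sv i = cc * (a i.castSucc : ℝ) * (u i - ((l i : ℤ) : ℝ)) := by
      intro i
      rw [hsv]
      simp only
      rw [hlv i, hxv i]
      ring
    have hsv0 : ∀ i, 0 ≤ sv i := by
      intro i
      rw [hsvi i]
      have := hle i
      have := (hca i).le
      nlinarith
    have hsvsum : ∑ i, sv i ≤ σ := by
      have h1 : ∑ i, sv i = cc * ∑ i, (a i.castSucc : ℝ) * (u i - ((l i : ℤ) : ℝ)) := by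
        rw [Finset.mul_sum]
        exact Finset.sum_congr rfl fun i _ => by rw [hsvi i]; ring
      rw [h1, hσ]
      calc cc * ∑ i, (a i.castSucc : ℝ) * (u i - ((l i : ℤ) : ℝ))
          ≤ cc * (f : ℝ) := by
            apply mul_le_mul_of_nonneg_left hsum hc0.le
        _ = (f : ℝ) * cc := mul_comm _ _
    refine ⟨B.mulVec (fun j => ((m j : ℤ) : ℝ)), ⟨m, rfl⟩, sv, ?_, ?_⟩
    · rw [Set.mem_smul_set]
      refine ⟨fun i => σ⁻¹ * sv i, ⟨fun i => mul_nonneg (inv_nonneg.mpr hσ0.le) (hsv0 i), ?_⟩, ?_⟩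
      · rw [← Finset.mul_sum]
        calc σ⁻¹ * ∑ i, sv i ≤ σ⁻¹ * σ :=
              mul_le_mul_of_nonneg_left hsvsum (inv_nonneg.mpr hσ0.le)
          _ = 1 := inv_mul_cancel₀ hσ0.ne'
      · funext i
        simp only [Pi.smul_apply, smul_eq_mul]
        rw [← mul_assoc, mul_inv_cancel₀ hσ0.ne', one_mul]
    · funext i
      simp only [Pi.add_apply, hsv]
      ring
  -- conclude
  have h1 : inhomMin (cornerSimplex n) (latticeOf B) ≤ σ :=
    csInf_le ⟨0, fun y hy => hy.1.le⟩ ⟨hσ0, hcov⟩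
  have h2 : absInhomMin (cornerSimplex n) ≤ inhomMin (cornerSimplex n) (latticeOf B) := by
    apply csInf_le
    · refine ⟨0, ?_⟩
      rintro μ ⟨B', -, rfl⟩
      apply Real.sInf_nonneg
      intro y hy
      exact hy.1.le
    · exact ⟨B, hBdet, rfl⟩
  have hmain : absInhomMin (cornerSimplex n) ≤ (f : ℝ) * cc := le_trans h2 h1
  rw [show n + 1 - 1 = n from rfl]
  rw [show ((1:ℝ)/((((n+1 : ℕ)):ℝ) - 1)) = ((1:ℝ)/(((n:ℕ):ℝ) + 1 - 1)) by push_cast; ring]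
  rw [hRHS]
  exact hmain
end

section
/- Let N ≥ 3 and let a_1 < a_2 < … < a_N be positive integers with GCD(a_1, …, a_N) = 1. Then f_N(a_1, …, a_N) > ((N−1)! · a_1 ⋯ a_N)^{1/(N-1)} (strict inequality). -/
/-- **Aliev–Gruber, Corollary 1**: for `N ≥ 3` and positive integers
`a_1 < … < a_N` with `gcd = 1`, the strict inequality
`f_N(a_1, …, a_N) > ((N-1)! · a_1 ⋯ a_N)^{1/(N-1)}` holds. -/
theorem frobenius_gt_factorial_bound (N : ℕ) (hN : 3 ≤ N) (a : Fin N → ℕ)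
    (hpos : ∀ i, 0 < a i) (hmono : StrictMono a)
    (hgcd : Finset.univ.gcd a = 1) (f : ℕ) (hf : IsFrobF N a f) :
    ((Nat.factorial (N - 1) : ℝ) * ∏ i, (a i : ℝ)) ^ ((1 : ℝ) / ((N : ℝ) - 1)) <
      (f : ℝ) := by
  classical
  obtain ⟨k, rfl⟩ : ∃ k, N = k + 1 := ⟨N - 1, by omega⟩
  have hk2 : 2 ≤ k := by omega
  set b : Fin k → ℕ := fun i => a i.succ with hb
  have hbpos : ∀ i, 0 < b i := fun i => hpos _
  have ha0 : 0 < a 0 := hpos 0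
  -- every m > f is positively representable
  have hrep : ∀ m, f < m →
      ∃ c : Fin (k+1) → ℕ, (∀ i, 0 < c i) ∧ ∑ i, c i * a i = m := by
    intro m hm
    by_contra h
    exact absurd (hf.2 h) (by omega)
  have hsum_le : ∀ c : Fin (k+1) → ℕ, (∀ i, 0 < c i) →
      ∑ i, a i ≤ ∑ i, c i * a i := by
    intro c hc
    refine Finset.sum_le_sum fun i _ => ?_
    exact Nat.le_mul_of_pos_left _ (hc i)
  have hfge : ∑ i, a i ≤ f + 1 := by
    by_contra h
    push_neg at h
    obtain ⟨c, hc, hcs⟩ := hrep (f + 1) (by omega)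
    have := hsum_le c hc
    omega
  have hSigma : ∑ i, a i = a 0 + ∑ i, b i := by
    rw [Fin.sum_univ_succ]
  have hfb : ∑ i, b i ≤ f := by omega
  set T : ℕ := f - ∑ i, b i with hTdef
  have hTe : T + ∑ i, b i = f := by omega
  have hf1 : 1 ≤ f := by
    have hk1 : k + 1 ≤ ∑ i, a i := by
      calc k + 1 = ∑ _i : Fin (k+1), 1 := by simp
        _ ≤ ∑ i, a i := Finset.sum_le_sum fun i _ => hpos i
    omega
  -- the finset of lattice points in the simplex
  set S_T := (Fintype.piFinset fun _ : Fin k => Finset.range (T+1)).filter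
      (fun d => ∑ i, d i * b i ≤ T) with hST
  -- Step 2: a 0 ≤ S_T.card via residues mod a 0
  have key : ∀ m ∈ Finset.Ico (f+1) (f+1+a 0), ∃ d, d ∈ S_T ∧
      ∃ c0, 0 < c0 ∧ ∑ i, d i * b i + ∑ i, b i + c0 * a 0 = m := by
    intro m hm
    rw [Finset.mem_Ico] at hm
    obtain ⟨c, hc, hcs⟩ := hrep m (by omega)
    set d : Fin k → ℕ := fun i => c i.succ - 1 with hd
    have e1 : ∑ i, d i * b i + ∑ i, b i = ∑ i : Fin k, c i.succ * b i := by
      rw [← Finset.sum_add_distrib]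
      refine Finset.sum_congr rfl fun i _ => ?_
      have h1 : 0 < c i.succ := hc i.succ
      have hdi : d i = c i.succ - 1 := rfl
      have h2 : c i.succ - 1 + 1 = c i.succ := by omega
      calc d i * b i + b i = (c i.succ - 1 + 1) * b i := by rw [hdi]; ring
        _ = c i.succ * b i := by rw [h2]
    have e2 : ∑ i, d i * b i + ∑ i, b i + c 0 * a 0 = m := by
      rw [e1, ← hcs, Fin.sum_univ_succ]
      ring
    have hc0 : a 0 ≤ c 0 * a 0 := Nat.le_mul_of_pos_left _ (hc 0)
    have hdT : ∑ i, d i * b i ≤ T := by omega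
    refine ⟨d, ?_, c 0, hc 0, e2⟩
    rw [hST, Finset.mem_filter]
    refine ⟨?_, hdT⟩
    rw [Fintype.mem_piFinset]
    intro i
    rw [Finset.mem_range]
    have h1 : d i ≤ d i * b i := Nat.le_mul_of_pos_right _ (hbpos i)
    have h2 : d i * b i ≤ ∑ j, d j * b j :=
      Finset.single_le_sum (f := fun j => d j * b j) (fun j _ => Nat.zero_le _)
        (Finset.mem_univ i)
    omega
  choose! dfun hdmem hdspec using key
  have hcard1 : a 0 ≤ S_T.card := by
    have hinj : Set.InjOn dfun (Finset.Ico (f+1) (f+1+a 0)) := by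
      intro m1 hm1 m2 hm2 he
      simp only [Finset.coe_Ico, Set.mem_Ico] at hm1 hm2
      obtain ⟨c1, hc1, e1⟩ := hdspec m1 (Finset.mem_Ico.mpr hm1)
      obtain ⟨c2, hc2, e2⟩ := hdspec m2 (Finset.mem_Ico.mpr hm2)
      rw [he] at e1
      -- m1 ≡ m2 mod a 0, both in window of length a 0
      have hmod : m1 % a 0 = m2 % a 0 := by
        conv_lhs => rw [← e1]
        conv_rhs => rw [← e2]
        rw [Nat.add_mul_mod_self_right, Nat.add_mul_mod_self_right]
      rcases le_total m1 m2 with hle | hle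
      · have hdvd : a 0 ∣ m2 - m1 := (Nat.modEq_iff_dvd' hle).mp hmod
        have := Nat.eq_zero_of_dvd_of_lt hdvd (by omega)
        omega
      · have hdvd : a 0 ∣ m1 - m2 :=
          (Nat.modEq_iff_dvd' hle).mp (hmod.symm : m2 ≡ m1 [MOD a 0])
        have := Nat.eq_zero_of_dvd_of_lt hdvd (by omega)
        omega
    calc a 0 = (Finset.Ico (f+1) (f+1+a 0)).card := by rw [Nat.card_Ico]; omega
      _ ≤ S_T.card := Finset.card_le_card_of_injOn dfun
          (fun m hm => hdmem m hm) hinj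
  -- Step 3: box-packing injection into k-subsets of range f
  set qn : (Fin k → ℕ) → (Fin k → ℕ) → Fin k → ℕ :=
    fun d r j => (j : ℕ) + ∑ i ∈ Finset.Iic j, (d i * b i + r i) with hqn
  have hqmono : ∀ d r, StrictMono (qn d r) := by
    intro d r j1 j2 hj
    have h1 : (j1 : ℕ) < (j2 : ℕ) := hj
    have h2 : ∑ i ∈ Finset.Iic j1, (d i * b i + r i) ≤
        ∑ i ∈ Finset.Iic j2, (d i * b i + r i) :=
      Finset.sum_le_sum_of_subset (Finset.Iic_subset_Iic.mpr hj.le)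
    simp only [hqn]
    omega
  set P := S_T ×ˢ (Fintype.piFinset fun i : Fin k => Finset.range (b i)) with hP
  have hmaps : ∀ dr ∈ P, Finset.image (qn dr.1 dr.2) Finset.univ ∈
      Finset.powersetCard k (Finset.range f) := by
    rintro ⟨d, r⟩ hdr
    rw [hP, Finset.mem_product] at hdr
    obtain ⟨hd, hr⟩ := hdr
    rw [hST, Finset.mem_filter] at hd
    rw [Fintype.mem_piFinset] at hr
    have hrb : ∀ i, r i < b i := fun i => Finset.mem_range.mp (hr i)
    have hptot : ∑ i, (d i * b i + r i) + k ≤ f := by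
      have h1 : ∑ i, d i * b i ≤ T := hd.2
      have h2 : ∑ i, (r i + 1) ≤ ∑ i, b i :=
        Finset.sum_le_sum fun i _ => hrb i
      have h3 : ∑ i, (d i * b i + r i) = ∑ i, d i * b i + ∑ i, r i :=
        Finset.sum_add_distrib
      have h4 : ∑ i, (r i + 1) = ∑ i, r i + k := by
        rw [Finset.sum_add_distrib]; simp
      omega
    rw [Finset.mem_powersetCard]
    constructor
    · intro x hx
      rw [Finset.mem_image] at hx
      obtain ⟨j, _, rfl⟩ := hx
      rw [Finset.mem_range]
      have h5 : ∑ i ∈ Finset.Iic j, (d i * b i + r i) ≤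
          ∑ i, (d i * b i + r i) :=
        Finset.sum_le_sum_of_subset (Finset.subset_univ _)
      have h6 : (j : ℕ) < k := j.isLt
      simp only [hqn]
      omega
    · rw [Finset.card_image_of_injective _ (hqmono d r).injective,
        Finset.card_univ, Fintype.card_fin]
  have hinj2 : Set.InjOn (fun dr : (Fin k → ℕ) × (Fin k → ℕ) =>
      Finset.image (qn dr.1 dr.2) Finset.univ) P := by
    rintro ⟨d1, r1⟩ h1 ⟨d2, r2⟩ h2 he
    simp only [Finset.mem_coe] at h1 h2
    have hcardim : (Finset.image (qn d1 r1) Finset.univ).card = k := by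
      rw [Finset.card_image_of_injective _ (hqmono d1 r1).injective,
        Finset.card_univ, Fintype.card_fin]
    have hq1 : qn d1 r1 = (Finset.image (qn d1 r1) Finset.univ).orderEmbOfFin hcardim :=
      Finset.orderEmbOfFin_unique hcardim
        (fun x => Finset.mem_image_of_mem _ (Finset.mem_univ x)) (hqmono d1 r1)
    have hq2 : qn d2 r2 = (Finset.image (qn d1 r1) Finset.univ).orderEmbOfFin hcardim := by
      refine Finset.orderEmbOfFin_unique hcardim (fun x => ?_) (hqmono d2 r2)
      have he' : Finset.image (qn d1 r1) Finset.univ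
          = Finset.image (qn d2 r2) Finset.univ := he
      rw [he']
      exact Finset.mem_image_of_mem _ (Finset.mem_univ x)
    have hq : qn d1 r1 = qn d2 r2 := hq1.trans hq2.symm
    -- recover p pointwise
    have hIic : ∀ j, ∑ i ∈ Finset.Iic j, (d1 i * b i + r1 i) =
        ∑ i ∈ Finset.Iic j, (d2 i * b i + r2 i) := by
      intro j
      have := congrFun hq j
      simp only [hqn] at this
      omega
    have hpe0 : ∀ n : ℕ, ∀ hn : n < k,
        d1 ⟨n, hn⟩ * b ⟨n, hn⟩ + r1 ⟨n, hn⟩ = d2 ⟨n, hn⟩ * b ⟨n, hn⟩ + r2 ⟨n, hn⟩ := by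
      intro n
      induction n using Nat.strong_induction_on with
      | _ n ih =>
        intro hn
        set j : Fin k := ⟨n, hn⟩ with hj
        have h3 := hIic j
        rw [← Finset.Iio_insert, Finset.sum_insert (by simp),
          Finset.sum_insert (by simp)] at h3
        have h4 : ∑ i ∈ Finset.Iio j, (d1 i * b i + r1 i) =
            ∑ i ∈ Finset.Iio j, (d2 i * b i + r2 i) := by
          refine Finset.sum_congr rfl fun i hi => ?_
          have hij0 : i < j := Finset.mem_Iio.mp hi
          have hij : (i : ℕ) < n := hij0
          have hi2 := ih i.val hij i.isLt
          simpa using hi2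
        omega
    have hpe : ∀ j : Fin k, d1 j * b j + r1 j = d2 j * b j + r2 j := by
      intro j
      have := hpe0 j.val j.isLt
      simpa using this
    -- recover d, r via div/mod
    rw [hP, Finset.mem_product, Fintype.mem_piFinset] at h1 h2
    have hr1 : ∀ i, r1 i < b i := fun i => Finset.mem_range.mp (h1.2 i)
    have hr2 : ∀ i, r2 i < b i := fun i => Finset.mem_range.mp (h2.2 i)
    have hre : ∀ i, r1 i = r2 i := by
      intro i
      have h5 := hpe i
      have h6 : (d1 i * b i + r1 i) % b i = r1 i := by
        rw [Nat.add_comm, Nat.add_mul_mod_self_right, Nat.mod_eq_of_lt (hr1 i)]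
      have h7 : (d2 i * b i + r2 i) % b i = r2 i := by
        rw [Nat.add_comm, Nat.add_mul_mod_self_right, Nat.mod_eq_of_lt (hr2 i)]
      rw [← h6, ← h7, h5]
    have hde : ∀ i, d1 i = d2 i := by
      intro i
      have h5 := hpe i
      rw [hre i] at h5
      have h8 : d1 i * b i = d2 i * b i := by omega
      exact Nat.eq_of_mul_eq_mul_right (hbpos i) h8
    exact Prod.ext (funext hde) (funext hre)
  have hcard2 : S_T.card * ∏ i, b i ≤ f.choose k := by
    have h9 := Finset.card_le_card_of_injOn _ hmaps hinj2
    rw [Finset.card_powersetCard, Finset.card_range] at h9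
    rw [hP, Finset.card_product, Fintype.card_piFinset] at h9
    simp only [Finset.card_range] at h9
    exact h9
  -- main nat inequality
  have hmain : k.factorial * ∏ i : Fin (k+1), a i < f ^ k := by
    calc k.factorial * ∏ i : Fin (k+1), a i
        = (a 0 * ∏ i, b i) * k.factorial := by
          rw [Fin.prod_univ_succ]; ring
      _ ≤ (S_T.card * ∏ i, b i) * k.factorial := by
          have := Nat.mul_le_mul_right (∏ i, b i) hcard1
          exact Nat.mul_le_mul_right _ this
      _ ≤ f.choose k * k.factorial := Nat.mul_le_mul_right _ hcard2
      _ = f.descFactorial k := by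
          rw [Nat.descFactorial_eq_factorial_mul_choose]; ring
      _ < f ^ k := Nat.descFactorial_lt_pow (Nat.one_le_iff_ne_zero.mp hf1) hk2
  -- pass to reals
  have hNk : (k + 1) - 1 = k := by omega
  rw [hNk]
  have hkR : ((k + 1 : ℕ) : ℝ) - 1 = (k : ℝ) := by push_cast; ring
  rw [hkR]
  have hkpos : (0 : ℝ) < (k : ℝ) := by
    have h10 : (0:ℕ) < k := by omega
    exact_mod_cast h10
  have hC : ((k.factorial * ∏ i : Fin (k+1), a i : ℕ) : ℝ) < (f : ℝ) ^ (k : ℕ) := by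
    exact_mod_cast hmain
  have hcast : ((Nat.factorial k : ℝ) * ∏ i, (a i : ℝ)) =
      ((k.factorial * ∏ i : Fin (k+1), a i : ℕ) : ℝ) := by push_cast; ring
  rw [hcast]
  have h0 : (0:ℝ) ≤ ((k.factorial * ∏ i : Fin (k+1), a i : ℕ) : ℝ) := Nat.cast_nonneg _
  have hC' : ((k.factorial * ∏ i : Fin (k+1), a i : ℕ) : ℝ) < (f : ℝ) ^ ((k:ℕ) : ℝ) := by
    rw [Real.rpow_natCast]; exact hC
  calc ((k.factorial * ∏ i : Fin (k+1), a i : ℕ) : ℝ) ^ ((1:ℝ)/(k:ℝ))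
      < ((f:ℝ) ^ ((k:ℕ):ℝ)) ^ ((1:ℝ)/(k:ℝ)) :=
        Real.rpow_lt_rpow h0 hC' (by positivity)
    _ = (f:ℝ) := by
        rw [← Real.rpow_mul (Nat.cast_nonneg f), mul_one_div,
          div_self (ne_of_gt hkpos), Real.rpow_one]
end

section
/- Let a_1 < a_2 < a_3 be positive integers with GCD(a_1, a_2, a_3) = 1. Then f_3(a_1, a_2, a_3) ≥ (3 a_1 a_2 a_3)^{1/2}. -/
/-! Write `a, b, c` for `a₁, a₂, a₃`. In every residue class of `a x + b y` modulo `c`, with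
`(x, y) ∈ ℕ²`, take the point of least weight `a x + b y`. For such a point,
`a (x + 1) + b (y + 1)` is not a positive combination of `a, b, c`, hence it is at most `f`.
The least points form a down-set of `ℕ²` of size at least `c` (every class is hit because
`gcd (a, b, c) = 1`), and every outer corner of this down-set lies in the zero class.
Stepping down from two outer corners gives two least points of the same class, so there is only
one outer corner off the axes: the down-set is the union of two rectangles
`[0, s] × [0, q]` and `[0, p] × [0, h]` with `p ≤ s`, `q ≤ h`. Counting gives
`c ≤ (s + 1)(q + 1) + (p + 1)(h - q)`, the two top corners give
`a (s + 1) + b (q + 1) ≤ f` and `a (p + 1) + b (h + 1) ≤ f`, and these combine to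
`3 a b c ≤ f²`. -/

theorem eq_of_outer_corners {G : Type*} [AddCancelCommMonoid G] {S : Set (ℕ × ℕ)}
    {g : ℕ × ℕ →+ G} (hinj : Set.InjOn g S) {x y x' y' : ℕ} (hS : (x + 1, y) ∈ S)
    (hS' : (x' + 1, y') ∈ S) (hg : g (x + 1, y + 1) = 0) (hg' : g (x' + 1, y' + 1) = 0) :
    x = x' ∧ y = y' := by
  have hsame : g (x + 1, y) = g (x' + 1, y') := by
    apply add_right_cancel (b := g (0, 1))
    rw [← map_add, ← map_add]
    exact hg.trans hg'.symm
  simpa using hinj hS hS' hsame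

theorem IsLowerSet.exists_subset_Iic_union_Iic {G : Type*} [AddCancelCommMonoid G]
    {S : Set (ℕ × ℕ)} (hS : IsLowerSet S) (hbdd : BddAbove S) (hne : S.Nonempty)
    (g : ℕ × ℕ →+ G) (hinj : Set.InjOn g S)
    (hcorner : ∀ x y, (x, y + 1) ∈ S → (x + 1, y) ∈ S → (x + 1, y + 1) ∉ S →
      g (x + 1, y + 1) = 0) :
    ∃ u v : ℕ × ℕ, u ∈ S ∧ v ∈ S ∧ v.1 ≤ u.1 ∧ u.2 ≤ v.2 ∧ S ⊆ Set.Iic u ∪ Set.Iic v := by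
  have mem {x y x' y' : ℕ} (h : (x, y) ∈ S) (hx : x' ≤ x) (hy : y' ≤ y) : (x', y') ∈ S :=
    hS (Prod.mk_le_mk.2 ⟨hx, hy⟩) h
  obtain ⟨B, hB⟩ := hbdd
  have row (y : ℕ) : BddAbove {x | (x, y) ∈ S} := ⟨B.1, fun _ hx => (hB hx).1⟩
  have col (x : ℕ) : BddAbove {y | (x, y) ∈ S} := ⟨B.2, fun _ hy => (hB hy).2⟩
  obtain ⟨z, hz⟩ := hne
  have h00 : ((0, 0) : ℕ × ℕ) ∈ S := mem hz (Nat.zero_le _) (Nat.zero_le _)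
  obtain ⟨s, hs, hs_max⟩ := (row 0).exists_isGreatest_of_nonempty ⟨0, h00⟩
  obtain ⟨h, hh, hh_max⟩ := (col 0).exists_isGreatest_of_nonempty ⟨0, h00⟩
  have fst_le {x y : ℕ} (hxy : (x, y) ∈ S) : x ≤ s := hs_max (mem hxy le_rfl (Nat.zero_le _))
  have snd_le {x y : ℕ} (hxy : (x, y) ∈ S) : y ≤ h := hh_max (mem hxy (Nat.zero_le _) le_rfl)
  obtain ⟨q, hq, hq_max⟩ := (col s).exists_isGreatest_of_nonempty ⟨0, hs⟩
  obtain ⟨p, hp, hp_max⟩ := (row h).exists_isGreatest_of_nonempty ⟨0, hh⟩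
  refine ⟨(s, q), (p, h), hq, hp, fst_le hp, snd_le hq, ?_⟩
  rintro ⟨x, y⟩ hxy
  by_contra hout
  simp only [Set.mem_union, Set.mem_Iic, Prod.mk_le_mk, not_or, not_and_or, not_le] at hout
  have := fst_le hxy
  have := snd_le hxy
  have hpx : p < x := by omega
  have hqy : q < y := by omega
  obtain ⟨Y, hY, hY_max⟩ := (col (p + 1)).exists_isGreatest_of_nonempty
    ⟨q + 1, mem hxy hpx hqy⟩
  have hYh : Y < h := lt_of_le_of_ne (snd_le hY) fun e => by
    have := hp_max (show (p + 1, h) ∈ S from e ▸ hY); omega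
  have corner₁ := hcorner p Y (mem hp le_rfl hYh) hY fun h' => by
    have := hY_max h'; omega
  obtain ⟨X, hX, hX_max⟩ := (row (q + 1)).exists_isGreatest_of_nonempty
    ⟨x, mem hxy le_rfl hqy⟩
  have hXs : X < s := lt_of_le_of_ne (fst_le hX) fun e => by
    have := hq_max (show (s, q + 1) ∈ S from e ▸ hX); omega
  have corner₂ := hcorner X q hX (mem hq hXs le_rfl) fun h' => by
    have := hX_max h'; omega
  have := eq_of_outer_corners hinj (mem hq hXs le_rfl) hY corner₂ corner₁
  have := hX_max (mem hxy le_rfl hqy)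
  omega

theorem Fintype.card_le_of_surjOn_Iic_union_Iic {G : Type*} [Fintype G] (g : ℕ × ℕ → G)
    {u v : ℕ × ℕ} (hvu : v.1 ≤ u.1) (hg : Set.SurjOn g (Set.Iic u ∪ Set.Iic v) Set.univ) :
    Fintype.card G ≤ (u.1 + 1) * (u.2 + 1) + (v.1 + 1) * (v.2 - u.2) := by
  classical
  set T := Finset.range (u.1 + 1) ×ˢ Finset.range (u.2 + 1) ∪
    Finset.range (v.1 + 1) ×ˢ Finset.Ioc u.2 v.2
  have hcover : Set.Iic u ∪ Set.Iic v ⊆ T := by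
    rintro ⟨x, y⟩ hxy
    simp only [Set.mem_union, Set.mem_Iic, Prod.le_def] at hxy
    simp only [T, Finset.coe_union, Finset.coe_product, Finset.coe_range, Finset.coe_Ioc,
      Set.mem_union, Set.mem_prod, Set.mem_Iio, Set.mem_Ioc]
    omega
  calc Fintype.card G = (Finset.univ : Finset G).card := rfl
    _ ≤ T.card := Finset.card_le_card_of_surjOn g (by simpa using hg.mono hcover subset_rfl)
    _ ≤ _ := Finset.card_union_le _ _
    _ = _ := by simp only [Finset.card_product, Finset.card_range, Nat.card_Ioc]

/-- Equality holds at `U = 2F/3` and `V = W = T - V = F/3`. -/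
theorem three_mul_add_mul_sub_le_sq {U V W T F : ℝ} (hW : 0 ≤ W) (hWU : W ≤ U)
    (hUV : U + V ≤ F) (hWT : W + T ≤ F) : 3 * (U * V + W * (T - V)) ≤ F ^ 2 := by
  nlinarith [mul_nonneg hW (by linarith : 0 ≤ F - W - T),
    mul_nonneg (sub_nonneg.2 hWU) (by linarith : 0 ≤ F - U - V),
    sq_nonneg (2 * W - U), sq_nonneg (2 * F - 3 * U)]

namespace FrobeniusThree

variable (a b c : ℕ)

def residue : ℕ × ℕ →+ ZMod c where
  toFun p := a * p.1 + b * p.2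
  map_zero' := by simp
  map_add' p q := by simp only [Prod.fst_add, Prod.snd_add, Nat.cast_add]; ring

/-- Breaking ties of the weight `a x + b y` by `x` makes the least point of a class unique. -/
def key : ℕ × ℕ →+ ℕ ×ₗ ℕ where
  toFun p := toLex (a * p.1 + b * p.2, p.1)
  map_zero' := rfl
  map_add' p q := by
    simp only [Prod.fst_add, Prod.snd_add, ← toLex_add, Prod.mk_add_mk]
    congr 2
    ring

def IsLeastInClass (p : ℕ × ℕ) : Prop :=
  ∀ q, residue a b c q = residue a b c p → key a b p ≤ key a b q

variable {a b c}

theorem key_le_key_iff {p q : ℕ × ℕ} :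
    key a b p ≤ key a b q ↔ a * p.1 + b * p.2 < a * q.1 + b * q.2 ∨
      a * p.1 + b * p.2 = a * q.1 + b * q.2 ∧ p.1 ≤ q.1 :=
  Prod.Lex.toLex_le_toLex

theorem key_injective (hb : 0 < b) : Function.Injective (key a b) := by
  rintro ⟨x, y⟩ ⟨x', y'⟩ h
  have h₁ := key_le_key_iff.1 h.le
  have h₂ := key_le_key_iff.1 h.ge
  dsimp only at h₁ h₂
  obtain rfl : x = x' := by omega
  simpa using Nat.eq_of_mul_eq_mul_left hb (show b * y = b * y' by omega)

theorem isLeastInClass_zero : IsLeastInClass a b c 0 :=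
  fun q _ => key_le_key_iff.2 (by simp only [Prod.fst_zero, Prod.snd_zero]; omega)

theorem exists_isLeastInClass (p : ℕ × ℕ) :
    ∃ r, residue a b c r = residue a b c p ∧ IsLeastInClass a b c r := by
  obtain ⟨r, hr, hmin⟩ := exists_minimalFor_of_wellFoundedLT
    (fun q => residue a b c q = residue a b c p) (key a b) ⟨p, rfl⟩
  exact ⟨r, hr, fun q hq => not_lt.1 fun hlt => hlt.not_ge (hmin (hq.trans hr) hlt.le)⟩

theorem injOn_residue_setOf_isLeastInClass (hb : 0 < b) :
    Set.InjOn (residue a b c) {p | IsLeastInClass a b c p} :=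
  fun p hp q hq h => key_injective hb ((hp q h.symm).antisymm (hq p h))

namespace IsLeastInClass

theorem of_add {p d : ℕ × ℕ} (h : IsLeastInClass a b c (p + d)) : IsLeastInClass a b c p :=
  fun q hq => le_of_add_le_add_right (a := key a b d) <| by
    simpa only [map_add] using h (q + d) (by simp only [map_add, hq])

theorem add {p r d : ℕ × ℕ} (hp : IsLeastInClass a b c p) (hr : IsLeastInClass a b c (r + d))
    (h : residue a b c (r + d) = residue a b c (p + d)) : IsLeastInClass a b c (p + d) := by
  have hpr : key a b p ≤ key a b r := hp r (by simpa only [map_add, add_left_inj] using h)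
  refine fun q hq => le_trans ?_ (hr q (hq.trans h.symm))
  rw [map_add, map_add]
  gcongr

theorem key_nonpos {p d : ℕ × ℕ} (h : IsLeastInClass a b c (p + d))
    (hd : residue a b c d = 0) : key a b d ≤ 0 :=
  le_of_add_le_add_left (a := key a b p) <| by
    simpa only [map_add, add_zero] using h p (by simp [hd])

theorem fst_lt (hc : 0 < c) {p : ℕ × ℕ} (hp : IsLeastInClass a b c p) : p.1 < c := by
  by_contra! hle
  obtain ⟨x, hx⟩ := Nat.exists_eq_add_of_le' hle
  have := key_nonpos (p := (x, p.2)) (d := (c, 0))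
    (by simpa only [Prod.mk_add_mk, ← hx, add_zero] using hp) (by simp [residue])
  rw [← map_zero (key a b), key_le_key_iff] at this
  simp only [Prod.fst_zero, Prod.snd_zero, mul_zero, add_zero] at this
  omega

theorem snd_lt (hb : 0 < b) (hc : 0 < c) {p : ℕ × ℕ} (hp : IsLeastInClass a b c p) :
    p.2 < c := by
  by_contra! hle
  obtain ⟨y, hy⟩ := Nat.exists_eq_add_of_le' hle
  have := key_nonpos (p := (p.1, y)) (d := (0, c))
    (by simpa only [Prod.mk_add_mk, ← hy, add_zero] using hp) (by simp [residue])
  rw [← map_zero (key a b), key_le_key_iff] at this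
  simp only [Prod.fst_zero, Prod.snd_zero, mul_zero, zero_add, add_zero] at this
  have := Nat.mul_pos hb hc
  omega

theorem residue_eq_zero_of_corner {x y : ℕ} (h₁ : IsLeastInClass a b c (x, y + 1))
    (h₂ : IsLeastInClass a b c (x + 1, y)) (h₃ : ¬ IsLeastInClass a b c (x + 1, y + 1)) :
    residue a b c (x + 1, y + 1) = 0 := by
  obtain ⟨⟨_ | r₁, _ | r₂⟩, hr, hr_least⟩ :=
    exists_isLeastInClass (a := a) (b := b) (c := c) (x + 1, y + 1)
  · rw [← hr]; exact map_zero _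
  · exact absurd (h₂.add (r := (0, r₂)) (d := (0, 1)) hr_least hr) h₃
  · exact absurd (h₁.add (r := (r₁, 0)) (d := (1, 0)) hr_least hr) h₃
  · exact absurd (h₁.add (r := (r₁, r₂ + 1)) (d := (1, 0)) hr_least hr) h₃

theorem add_le_of_isFrobF (hc : 0 < c) {p : ℕ × ℕ} (hp : IsLeastInClass a b c p) {f : ℕ}
    (hf : IsFrobF 3 ![a, b, c] f) : a * (p.1 + 1) + b * (p.2 + 1) ≤ f := by
  refine hf.2 fun ⟨m, hm, hsum⟩ => ?_
  simp only [Fin.sum_univ_three, Matrix.cons_val_zero, Matrix.cons_val_one,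
    Matrix.cons_val_two, Matrix.tail_cons, Matrix.head_cons] at hsum
  obtain ⟨x, hx⟩ := Nat.exists_eq_add_one_of_ne_zero (hm 0).ne'
  obtain ⟨y, hy⟩ := Nat.exists_eq_add_one_of_ne_zero (hm 1).ne'
  obtain ⟨z, hz⟩ := Nat.exists_eq_add_one_of_ne_zero (hm 2).ne'
  have hw : a * x + b * y + c * (z + 1) = a * p.1 + b * p.2 := by
    rw [hx, hy, hz] at hsum; linarith
  have hres : residue a b c (x, y) = residue a b c p := by
    have := congrArg (Nat.cast : ℕ → ZMod c) hw
    push_cast [ZMod.natCast_self] at this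
    simpa [residue] using this
  have := key_le_key_iff.1 (hp (x, y) hres)
  dsimp only at this
  have : 0 < c * (z + 1) := by positivity
  omega

end IsLeastInClass

theorem residue_surjective [NeZero c] (h : Nat.Coprime (Nat.gcd a b) c) :
    Function.Surjective (residue a b c) := by
  intro r
  have hd : IsUnit ((Nat.gcd a b : ℕ) : ZMod c) := (ZMod.isUnit_iff_coprime _ _).2 h
  set t := (hd.unit⁻¹ : (ZMod c)ˣ) * r
  refine ⟨((Nat.gcdA a b * t : ZMod c).val, (Nat.gcdB a b * t : ZMod c).val), ?_⟩
  have bezout : ((Nat.gcd a b : ℕ) : ZMod c) = a * Nat.gcdA a b + b * Nat.gcdB a b := by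
    exact_mod_cast congrArg (Int.cast : ℤ → ZMod c) (Nat.gcd_eq_gcd_ab a b)
  calc residue a b c _ = (a * Nat.gcdA a b + b * Nat.gcdB a b : ZMod c) * t := by
        simp only [residue, AddMonoidHom.coe_mk, ZeroHom.coe_mk, ZMod.natCast_zmod_val]; ring
    _ = r := by rw [← bezout, ← mul_assoc, hd.mul_val_inv, one_mul]

theorem isLowerSet_setOf_isLeastInClass : IsLowerSet {p | IsLeastInClass a b c p} :=
  fun _ _ hle hp => by
    obtain ⟨d, rfl⟩ := exists_add_of_le hle
    exact IsLeastInClass.of_add hp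

theorem bddAbove_setOf_isLeastInClass (hb : 0 < b) (hc : 0 < c) :
    BddAbove {p | IsLeastInClass a b c p} :=
  ⟨(c, c), fun _ hp => Prod.le_def.2 ⟨(hp.fst_lt hc).le, (hp.snd_lt hb hc).le⟩⟩

end FrobeniusThree

open FrobeniusThree

theorem frobenius_three_lower_bound_general (a₁ a₂ a₃ : ℕ)
    (h₁₂ : a₁ < a₂) (h₂₃ : a₂ < a₃)
    (hgcd : Nat.gcd (Nat.gcd a₁ a₂) a₃ = 1)
    (f : ℕ) (hf : IsFrobF 3 ![a₁, a₂, a₃] f) :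
    Real.sqrt (3 * a₁ * a₂ * a₃) ≤ (f : ℝ) := by
  have hb : 0 < a₂ := by omega
  have hc : 0 < a₃ := by omega
  have : NeZero a₃ := ⟨hc.ne'⟩
  obtain ⟨u, v, hu, hv, hvu, huv, hcover⟩ :=
    isLowerSet_setOf_isLeastInClass.exists_subset_Iic_union_Iic
      (bddAbove_setOf_isLeastInClass hb hc) ⟨0, isLeastInClass_zero⟩ (residue a₁ a₂ a₃)
      (injOn_residue_setOf_isLeastInClass hb) fun _ _ => IsLeastInClass.residue_eq_zero_of_corner
  have hcard : a₃ ≤ (u.1 + 1) * (u.2 + 1) + (v.1 + 1) * (v.2 - u.2) := by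
    simpa using Fintype.card_le_of_surjOn_Iic_union_Iic (residue a₁ a₂ a₃) hvu fun r _ => by
      obtain ⟨p, hpr⟩ := residue_surjective hgcd r
      obtain ⟨q, hqp, hq⟩ := exists_isLeastInClass (c := a₃) p
      exact ⟨q, hcover hq, hqp.trans hpr⟩
  have hfu := hu.add_le_of_isFrobF hc hf
  have hfv := hv.add_le_of_isFrobF hc hf
  rw [Real.sqrt_le_left (Nat.cast_nonneg f)]
  calc (3 * a₁ * a₂ * a₃ : ℝ) = 3 * (a₁ * a₂) * a₃ := by ring
    _ ≤ 3 * (a₁ * a₂) * ((u.1 + 1) * (u.2 + 1) + (v.1 + 1) * ((v.2 : ℝ) - u.2)) := by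
        gcongr; exact_mod_cast hcard
    _ = 3 * (a₁ * (u.1 + 1) * (a₂ * (u.2 + 1))
          + a₁ * (v.1 + 1) * (a₂ * (v.2 + 1) - a₂ * (u.2 + 1))) := by ring
    _ ≤ f ^ 2 := three_mul_add_mul_sub_le_sq (by positivity) (by gcongr)
        (by exact_mod_cast hfu) (by exact_mod_cast hfv)

/-- **Aliev–Gruber, Corollary 2 (first part)**: for positive integers
`a₁ < a₂ < a₃` with `gcd(a₁, a₂, a₃) = 1`, one has
`f₃(a₁, a₂, a₃) ≥ (3 a₁ a₂ a₃)^{1/2}`. -/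
theorem frobenius_three_lower_bound (a₁ a₂ a₃ : ℕ) (h₀ : 0 < a₁)
    (h₁₂ : a₁ < a₂) (h₂₃ : a₂ < a₃)
    (hgcd : Nat.gcd (Nat.gcd a₁ a₂) a₃ = 1)
    (f : ℕ) (hf : IsFrobF 3 ![a₁, a₂, a₃] f) :
    Real.sqrt (3 * a₁ * a₂ * a₃) ≤ (f : ℝ) :=
  frobenius_three_lower_bound_general a₁ a₂ a₃ h₁₂ h₂₃ hgcd f hf
end
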